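/- arXiv:2402.14452 — 2 statements merged into one kernel-verified Lean document; each statement's English description precedes it below -/
import Mathlib

section
/- Let X be a nonempty set, p a partial metric on X, and a a positive real number such that p(x,x) = a for all x ∈ X. If for a sequence {x_n} in X there exists a non-negative real number r with st-LIM^r x_n ≠ ∅, then {x_n} is statistically bounded; that is, for every fixed u ∈ X there exists a positive real number M such that d({n ∈ ℕ : p(x_n,u) ≥ M}) = 0. -/
/-- A partial metric on a set `X`. -/
structure IsPartialMetric {X : Type*} (p : X → X → ℝ) : Prop where
  nonneg : ∀ x y : X, 0 ≤ p x y
  self_le : ∀ x y : X, p x x ≤ p x y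
  eq_iff : ∀ x y : X, x = y ↔ p x x = p x y ∧ p x y = p y y
  symm : ∀ x y : X, p x y = p y x
  triangle : ∀ x y z : X, p x y ≤ p x z + p z y - p z z


open Classical in
/-- `A ⊆ ℕ` has natural density `d`. -/
def HasNatDensity (A : Set ℕ) (d : ℝ) : Prop :=
  Filter.Tendsto
    (fun n : ℕ => (((Finset.range n).filter (fun k => k ∈ A)).card : ℝ) / (n : ℝ))
    Filter.atTop (nhds d)


open Classical in
lemma hasNatDensity_zero_of_subset {A B : Set ℕ} (hAB : A ⊆ B)
    (hB : HasNatDensity B 0) : HasNatDensity A 0 := by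
  unfold HasNatDensity at *
  apply squeeze_zero (fun n => by positivity) _ hB
  intro n
  gcongr

/-- `l` is a rough statistical limit point of the sequence `x` with roughness degree `r`,
i.e. `l ∈ st-LIM^r x_n`. -/
def RStatLimit {X : Type*} (p : X → X → ℝ) (x : ℕ → X) (r : ℝ) (l : X) : Prop :=
  ∀ ε : ℝ, 0 < ε → HasNatDensity {n : ℕ | r + ε ≤ |p (x n) l - p l l|} 0

/-- If all self-distances equal `a > 0` and `st-LIM^r x_n ≠ ∅` for some `r ≥ 0`, then
`x_n` is statistically bounded. -/
theorem statBounded_of_rStatLimit_nonempty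
    {X : Type*} [Nonempty X] (p : X → X → ℝ) (hp : IsPartialMetric p)
    (a : ℝ) (ha : 0 < a) (hself : ∀ x : X, p x x = a)
    (x : ℕ → X)
    (h : ∃ r : ℝ, 0 ≤ r ∧ ∃ l : X, RStatLimit p x r l) :
    ∀ u : X, ∃ M : ℝ, 0 < M ∧ HasNatDensity {n : ℕ | M ≤ p (x n) u} 0 := by
  obtain ⟨r, hr, l, hl⟩ := h
  intro u
  refine ⟨r + 1 + p l u + 1, by nlinarith [hp.nonneg l u], ?_⟩
  have hd := hl 1 one_pos
  refine hasNatDensity_zero_of_subset ?_ hd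
  intro n hn
  simp only [Set.mem_setOf_eq] at hn ⊢
  have htri := hp.triangle (x n) u l
  have h1 : p (x n) l - p l l ≤ |p (x n) l - p l l| := le_abs_self _
  have h2 := hself l
  have h3 := hself (x n)
  have h4 := hp.symm l u
  by_contra hc
  push_neg at hc
  nlinarith
end

section
/- Let X be a nonempty set, p a partial metric on X, and {x_n}, {y_n} two sequences in X such that p(x_n, y_n) → 0 as n → ∞. If {y_n} is rough statistically convergent to y with roughness degree r ≥ 0 and there is a positive number d such that p(y_n, y_n) ≤ d for all n, then {x_n} is rough statistically convergent to y with roughness degree r + d. -/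
/-! In a partial metric `|p(x, l) - p(y, l)| ≤ p(x, y)`, so
`|p(xₙ, l) - p(l, l)| ≤ |p(yₙ, l) - p(l, l)| + p(xₙ, yₙ)`. Once `p(xₙ, yₙ) < d + ε/2`, which holds
for all but finitely many `n`, an index with `|p(xₙ, l) - p(l, l)| ≥ r + d + ε` must have
`|p(yₙ, l) - p(l, l)| ≥ r + ε/2`; such indices have density zero, and finite sets and unions of
density-zero sets have density zero. -/

open Filter

namespace HasNatDensity

lemma mono_zero {A B : Set ℕ} (h : A ⊆ B) (hB : HasNatDensity B 0) : HasNatDensity A 0 := by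
  refine squeeze_zero (fun n => by positivity) (fun n => ?_) hB
  gcongr

lemma union_zero {A B : Set ℕ} (hA : HasNatDensity A 0) (hB : HasNatDensity B 0) :
    HasNatDensity (A ∪ B) 0 := by
  refine squeeze_zero (fun n => by positivity) (fun n => ?_) (by simpa using hA.add hB)
  rw [← add_div]
  gcongr
  classical
  exact_mod_cast (Finset.card_le_card fun k => by
    simp only [Finset.mem_filter, Finset.mem_union, Set.mem_union]; tauto).trans
    (Finset.card_union_le _ _)

end HasNatDensity

lemma Set.Finite.hasNatDensity_zero {A : Set ℕ} (hA : A.Finite) : HasNatDensity A 0 := by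
  refine squeeze_zero (fun n => by positivity) (fun n => ?_)
    (tendsto_const_div_atTop_nhds_zero_nat (hA.toFinset.card : ℝ))
  gcongr
  intro k hk
  simp only [Finset.mem_filter] at hk
  simpa using hk.2

lemma IsPartialMetric.abs_sub_le {X : Type*} {p : X → X → ℝ} (hp : IsPartialMetric p)
    (x y z : X) : |p x z - p y z| ≤ p x y := by
  have hxz := hp.triangle x z y
  have hyz := hp.triangle y z x
  rw [hp.symm y x] at hyz
  rw [abs_sub_le_iff]
  constructor <;> linarith [hp.nonneg x x, hp.nonneg y y]

lemma IsPartialMetric.rStatLimit_of_eventually_lt {X : Type*} {p : X → X → ℝ}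
    (hp : IsPartialMetric p) {x y : ℕ → X} {l : X} {r d : ℝ} (hy : RStatLimit p y r l)
    (hxy : ∀ ε > 0, ∀ᶠ n in atTop, p (x n) (y n) < d + ε) :
    RStatLimit p x (r + d) l := by
  intro ε hε
  have hfin : {n | d + ε / 2 ≤ p (x n) (y n)}.Finite := by
    simpa [← Nat.cofinite_eq_atTop] using hxy (ε / 2) (half_pos hε)
  refine (HasNatDensity.union_zero (hy (ε / 2) (half_pos hε)) hfin.hasNatDensity_zero).mono_zero
    fun n hn => ?_
  by_contra hc
  simp only [Set.mem_ofPred_eq, Set.mem_union, not_or, not_le] at hn hc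
  have := _root_.abs_sub_le (p (x n) l) (p (y n) l) (p l l)
  linarith [hp.abs_sub_le (x n) (y n) l]

theorem rStatLimit_transfer_add'_general
    {X : Type*} (p : X → X → ℝ) (hp : IsPartialMetric p)
    (x y : ℕ → X)
    (hxy : Filter.Tendsto (fun n : ℕ => p (x n) (y n)) Filter.atTop (nhds 0))
    (l : X) (r : ℝ) (hy : RStatLimit p y r l)
    (d : ℝ) (hd : 0 < d) :
    RStatLimit p x (r + d) l :=
  hp.rStatLimit_of_eventually_lt hy fun ε hε => hxy.eventually_lt_const (by linarith)

/-- If `p (x_n, y_n) → 0`, `y_n` is `r`-statistically convergent to `y`, and the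
self-distances satisfy `p (y_n, y_n) ≤ d` for all `n` with `d > 0`, then `x_n` is
`(r + d)`-statistically convergent to `y`. -/
theorem rStatLimit_transfer_add'
    {X : Type*} [Nonempty X] (p : X → X → ℝ) (hp : IsPartialMetric p)
    (x y : ℕ → X)
    (hxy : Filter.Tendsto (fun n : ℕ => p (x n) (y n)) Filter.atTop (nhds 0))
    (l : X) (r : ℝ) (hr : 0 ≤ r) (hy : RStatLimit p y r l)
    (d : ℝ) (hd : 0 < d) (hselfy : ∀ n : ℕ, p (y n) (y n) ≤ d) :
    RStatLimit p x (r + d) l :=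
  rStatLimit_transfer_add'_general p hp x y hxy l r hy d hd
end
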